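/- The minimum root of the Faddeev-LeVerrier-style min-plus characteristic polynomial ĝ_A(x) = x^n ⊕ c_1 ⊗ x^{n-1} ⊕ ⋯ ⊕ c_n, with coefficients defined recursively by c_k = Tr(A^k ⊕ c_1 ⊗ A^{k-1} ⊕ ⋯ ⊕ c_{k-1} ⊗ A), equals the minimum average weight of a circuit in the network 𝒩(A), hence equals the min-plus eigenvalue of A. -/

import Mathlib

open Finset

/-- Tropical (min-plus) matrix product. -/
def tmul {n : ℕ} (A B : Matrix (Fin n) (Fin n) (WithTop ℝ)) :
    Matrix (Fin n) (Fin n) (WithTop ℝ) :=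
  fun i j => Finset.univ.inf fun l => A i l + B l j

/-- Tropical matrix power (`A¹ = A`, `A^{k+1} = A^k ⊗ A`). -/
def tpow {n : ℕ} (A : Matrix (Fin n) (Fin n) (WithTop ℝ)) : ℕ →
    Matrix (Fin n) (Fin n) (WithTop ℝ)
  | 0 => fun i j => if i = j then 0 else ⊤
  | k + 1 => tmul (tpow A k) A

/-- Tropical trace: the minimum of the diagonal entries. -/
def tTrace {n : ℕ} (M : Matrix (Fin n) (Fin n) (WithTop ℝ)) : WithTop ℝ :=
  Finset.univ.inf fun i => M i i

/-- The affine term `c_j + (n-j)x` of a min-plus polynomial. -/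
def tTerm (n : ℕ) (c : ℕ → WithTop ℝ) (j : ℕ) (x : ℝ) : WithTop ℝ :=
  c j + ((((n - j : ℕ) : ℝ) * x : ℝ) : WithTop ℝ)

/-- `x` is a root (breakpoint) of the min-plus polynomial with coefficients `c`:
the minimum of the affine terms is attained by at least two distinct terms. -/
def IsTropRoot (n : ℕ) (c : ℕ → WithTop ℝ) (x : ℝ) : Prop :=
  ∃ k l, k ≤ n ∧ l ≤ n ∧ k ≠ l ∧
    (∀ j ≤ n, tTerm n c k x ≤ tTerm n c j x) ∧
    (∀ j ≤ n, tTerm n c l x ≤ tTerm n c j x)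

/-- `w` is the average weight of some circuit in the network of `A`. -/
def IsCircuitAvg {n : ℕ} (A : Matrix (Fin n) (Fin n) (WithTop ℝ)) (w : ℝ) : Prop :=
  ∃ (s : ℕ) (f : ℕ → Fin n), 0 < s ∧ f s = f 0 ∧
    (∀ k l, k < s → l < s → f k = f l → k = l) ∧
    ∑ k ∈ range s, A (f k) (f (k + 1)) = (((s : ℝ) * w : ℝ) : WithTop ℝ)

/-!
Let `λ` be the least circuit mean of `A`. A closed walk splits into circuits, so a closed walk of
length `t` weighs at least `tλ`; hence `Tr(A^t) ≥ tλ` and, inductively, `c_k ≥ kλ`, while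
`c_s ≤ Tr(A^s) ≤ sλ` for the length `s` of an optimal circuit. Thus the terms `nx` and
`c_s + (n - s)x` of `ĝ_A` tie at `x = λ`, and for `x < λ` the term `nx` is strictly the smallest.

For the eigenvector, `B = A - λ` has no negative circuit, so cutting cycles out of long walks shows
that every entry of a power `B^t` is bounded below by the Kleene plus `B⁺ = B ⊕ ⋯ ⊕ Bⁿ`. The column
of `B⁺` through a vertex of an optimal circuit then satisfies `B ⊗ v = v`.
-/

open Tropical

section TropicalMatrix

variable {n : ℕ}

-- Over `Tropical (WithTop ℝ)` these are ordinary matrix products, so associativity comes for free.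
lemma tmul_eq_map_untrop_mul (A B : Matrix (Fin n) (Fin n) (WithTop ℝ)) :
    tmul A B = (A.map trop * B.map trop).map untrop := by
  ext i j
  simp [tmul, Matrix.mul_apply, Finset.untrop_sum', Function.comp_def]

lemma tpow_eq_map_untrop_pow (A : Matrix (Fin n) (Fin n) (WithTop ℝ)) (t : ℕ) :
    tpow A t = (A.map trop ^ t).map untrop := by
  induction t with
  | zero =>
    ext i j
    by_cases h : i = j <;> simp [tpow, h]
  | succ t ih =>
    rw [tpow, tmul_eq_map_untrop_mul, ih, pow_succ]
    congr

lemma tpow_succ' (A : Matrix (Fin n) (Fin n) (WithTop ℝ)) (t : ℕ) :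
    tpow A (t + 1) = tmul A (tpow A t) := by
  rw [tpow_eq_map_untrop_pow, tmul_eq_map_untrop_mul, tpow_eq_map_untrop_pow, pow_succ']
  congr

lemma tpow_one (A : Matrix (Fin n) (Fin n) (WithTop ℝ)) : tpow A 1 = A := by
  ext i j
  simp [tpow_eq_map_untrop_pow]

end TropicalMatrix

lemma add_finset_inf {ι : Type*} (a : WithTop ℝ) (s : Finset ι) (f : ι → WithTop ℝ) :
    a + s.inf f = s.inf fun i => a + f i := by
  apply trop_injective
  simp [Finset.trop_inf, trop_add, Finset.mul_sum]

def walkWeight {n : ℕ} (A : Matrix (Fin n) (Fin n) (WithTop ℝ)) (s : ℕ) (f : ℕ → Fin n) :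
    WithTop ℝ :=
  ∑ k ∈ range s, A (f k) (f (k + 1))

def shortcut {n : ℕ} (f : ℕ → Fin n) (p d : ℕ) : ℕ → Fin n :=
  fun m => if m ≤ p then f m else f (m + d)

section Walks

variable {n : ℕ} (A : Matrix (Fin n) (Fin n) (WithTop ℝ))

lemma tpow_succ_le (s : ℕ) (i l j : Fin n) : tpow A (s + 1) i j ≤ tpow A s i l + A l j :=
  Finset.inf_le (f := fun l => tpow A s i l + A l j) (mem_univ l)

lemma tpow_succ_le' (s : ℕ) (i l j : Fin n) : tpow A (s + 1) i j ≤ A i l + tpow A s l j := by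
  rw [tpow_succ']
  exact Finset.inf_le (f := fun l => A i l + tpow A s l j) (mem_univ l)

lemma tpow_le_walkWeight (s : ℕ) (f : ℕ → Fin n) :
    tpow A s (f 0) (f s) ≤ walkWeight A s f := by
  induction s with
  | zero => simp [tpow, walkWeight]
  | succ s ih =>
    calc tpow A (s + 1) (f 0) (f (s + 1))
        ≤ tpow A s (f 0) (f s) + A (f s) (f (s + 1)) := tpow_succ_le A s _ _ _
      _ ≤ walkWeight A s f + A (f s) (f (s + 1)) := add_le_add_left ih _
      _ = walkWeight A (s + 1) f := (sum_range_succ _ s).symm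

lemma walkWeight_congr {s : ℕ} {f g : ℕ → Fin n} (h : ∀ k ≤ s, f k = g k) :
    walkWeight A s f = walkWeight A s g :=
  sum_congr rfl fun k hk => by
    have hk := mem_range.1 hk
    rw [h k hk.le, h (k + 1) hk]

lemma exists_walkWeight_le_tpow {s : ℕ} (hs : 0 < s) (i j : Fin n) :
    ∃ f : ℕ → Fin n, f 0 = i ∧ f s = j ∧ walkWeight A s f ≤ tpow A s i j := by
  induction s, hs using Nat.le_induction generalizing j with
  | base =>
    refine ⟨fun k => if k = 0 then i else j, rfl, rfl, ?_⟩
    simp [walkWeight, tpow_one]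
  | succ s hs ih =>
    obtain ⟨l, -, hl⟩ := exists_mem_eq_inf univ ⟨i, mem_univ i⟩ fun l => tpow A s i l + A l j
    obtain ⟨f, rfl, hfs, hf⟩ := ih l
    refine ⟨fun k => if k ≤ s then f k else j, by simp, by simp, ?_⟩
    have hwalk : walkWeight A (s + 1) (fun k => if k ≤ s then f k else j)
        = walkWeight A s f + A l j := by
      rw [walkWeight, sum_range_succ]
      congr 1
      · exact walkWeight_congr A fun k hk => if_pos hk
      · simp [hfs]
    rw [hwalk, tpow, tmul, hl]
    exact add_le_add_left hf _

lemma shortcut_of_le {f : ℕ → Fin n} {p d m : ℕ} (hm : m ≤ p) : shortcut f p d m = f m :=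
  if_pos hm

lemma shortcut_add {f : ℕ → Fin n} {p d : ℕ} (hf : f p = f (p + d)) (k : ℕ) :
    shortcut f p d (p + k) = f (p + d + k) := by
  rcases Nat.eq_zero_or_pos k with rfl | hk
  · simp [shortcut, hf]
  · rw [shortcut, if_neg (by omega), add_right_comm]

lemma walkWeight_eq_shortcut_add_cycle {f : ℕ → Fin n} {p d : ℕ} (hf : f p = f (p + d))
    (r : ℕ) : walkWeight A (p + d + r) f =
      walkWeight A (p + r) (shortcut f p d) + walkWeight A d (fun k => f (p + k)) := by
  have hhead : ∑ k ∈ range p, A (shortcut f p d k) (shortcut f p d (k + 1))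
      = ∑ k ∈ range p, A (f k) (f (k + 1)) :=
    sum_congr rfl fun k hk => by
      have hk := mem_range.1 hk
      rw [shortcut_of_le hk.le, shortcut_of_le hk]
  have htail : ∀ k, A (shortcut f p d (p + k)) (shortcut f p d (p + k + 1))
      = A (f (p + d + k)) (f (p + d + k + 1)) := fun k => by
    rw [shortcut_add hf, add_assoc p k 1, shortcut_add hf]; rfl
  simp only [walkWeight, sum_range_add, hhead, htail]
  rw [add_right_comm]
  rfl

end Walks

section Circuits

variable {n : ℕ} (A : Matrix (Fin n) (Fin n) (WithTop ℝ))

lemma le_of_injOn_Iio {f : ℕ → Fin n} {m : ℕ} (h : Set.InjOn f (Set.Iio m)) : m ≤ n := by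
  simpa using card_le_card_of_injOn (s := range m) f (fun _ _ => mem_univ _) (by simpa using h)

lemma exists_eq_add_of_not_injOn_Iio {f : ℕ → Fin n} {m : ℕ} (h : ¬ Set.InjOn f (Set.Iio m)) :
    ∃ p d, 0 < d ∧ p + d < m ∧ f p = f (p + d) := by
  simp only [Set.InjOn, Set.mem_Iio, not_forall] at h
  obtain ⟨k, hk, l, hl, hfkl, hkl⟩ := h
  rcases Nat.lt_or_gt_of_ne hkl with h | h
  · exact ⟨k, l - k, by omega, by omega, by rwa [Nat.add_sub_cancel' h.le]⟩
  · exact ⟨l, k - l, by omega, by omega, by rw [Nat.add_sub_cancel' h.le, hfkl]⟩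

lemma coe_mul_le_walkWeight_of_closed {lam : ℝ}
    (hlam : lam ∈ lowerBounds {w | IsCircuitAvg A w}) {s : ℕ} (hs : 0 < s) {f : ℕ → Fin n}
    (hf : f s = f 0) :
    ((s * lam : ℝ) : WithTop ℝ) ≤ walkWeight A s f := by
  induction s using Nat.strong_induction_on generalizing f with
  | _ s ih =>
  by_cases hinj : Set.InjOn f (Set.Iio s)
  · cases hw : walkWeight A s f with
    | top => exact le_top
    | coe r =>
      have hcirc : IsCircuitAvg A (r / s) :=
        ⟨s, f, hs, hf, fun k l hk hl h => hinj hk hl h, by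
          rw [mul_div_cancel₀ _ (by positivity)]; exact hw⟩
      have := hlam hcirc
      exact WithTop.coe_le_coe.2 (by rwa [le_div_iff₀ (by positivity), mul_comm] at this)
  · obtain ⟨p, d, hd, hpd, hfpd⟩ := exists_eq_add_of_not_injOn_Iio hinj
    obtain ⟨r, rfl⟩ : ∃ r, s = p + d + r := ⟨s - (p + d), by omega⟩
    have hshort := ih (p + r) (by omega) (by omega) (f := shortcut f p d)
      (by rw [shortcut_add hfpd, hf, shortcut_of_le (Nat.zero_le p)])
    have hcycle := ih d (by omega) hd (f := fun k => f (p + k)) (by simp [hfpd])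
    calc ((↑(p + d + r) * lam : ℝ) : WithTop ℝ)
        = ((↑(p + r) * lam : ℝ) : WithTop ℝ) + ((d * lam : ℝ) : WithTop ℝ) := by
          rw [← WithTop.coe_add, WithTop.coe_eq_coe]; push_cast; ring
      _ ≤ _ := add_le_add hshort hcycle
      _ = _ := (walkWeight_eq_shortcut_add_cycle A hfpd r).symm

lemma coe_mul_le_tpow_self {lam : ℝ} (hlam : lam ∈ lowerBounds {w | IsCircuitAvg A w})
    {t : ℕ} (ht : 0 < t) (i : Fin n) : ((t * lam : ℝ) : WithTop ℝ) ≤ tpow A t i i := by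
  obtain ⟨f, hf0, hft, hf⟩ := exists_walkWeight_le_tpow A ht i i
  exact (coe_mul_le_walkWeight_of_closed A hlam ht (hft.trans hf0.symm)).trans hf

-- A circuit has at most `n` edges, so it is determined by its length and first `n + 1` vertices.
lemma finite_setOf_isCircuitAvg : {w | IsCircuitAvg A w}.Finite := by
  refine (Set.finite_range fun sg : Fin (n + 1) × (Fin (n + 1) → Fin n) =>
    (walkWeight A sg.1 fun k => sg.2 (Fin.ofNat (n + 1) k)).untopD 0 / sg.1).subset ?_
  rintro w ⟨s, f, hs, -, hinj, hw⟩
  have hsn : s ≤ n := le_of_injOn_Iio fun k hk l hl h => hinj k l hk hl h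
  refine ⟨(⟨s, by omega⟩, fun k => f k), ?_⟩
  have hwalk : walkWeight A s (fun k => f (Fin.ofNat (n + 1) k : ℕ)) = walkWeight A s f :=
    walkWeight_congr A fun k hk => by rw [Fin.val_ofNat, Nat.mod_eq_of_lt (by omega)]
  simp only [hwalk]
  rw [walkWeight, hw, WithTop.untopD_coe, mul_div_cancel_left₀ _ (by positivity)]

lemma exists_isLeast_setOf_isCircuitAvg (h : ∃ w, IsCircuitAvg A w) :
    ∃ lam, IsLeast {w | IsCircuitAvg A w} lam :=
  (finite_setOf_isCircuitAvg A).isCompact.exists_isLeast h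

lemma walkWeight_add_const (a : ℝ) (s : ℕ) (f : ℕ → Fin n) :
    walkWeight (fun i j => A i j + (a : WithTop ℝ)) s f =
      walkWeight A s f + ((s * a : ℝ) : WithTop ℝ) := by
  simp [walkWeight, sum_add_distrib, ← WithTop.coe_nsmul]

lemma IsCircuitAvg.add_const {w : ℝ} (h : IsCircuitAvg A w) (a : ℝ) :
    IsCircuitAvg (fun i j => A i j + (a : WithTop ℝ)) (w + a) := by
  obtain ⟨s, f, hs, hf, hinj, hw⟩ := h
  refine ⟨s, f, hs, hf, hinj, (walkWeight_add_const A a s f).trans ?_⟩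
  rw [walkWeight, hw, ← WithTop.coe_add, mul_add]

end Circuits

section Coefficients

variable {n : ℕ} (A : Matrix (Fin n) (Fin n) (WithTop ℝ)) (c : ℕ → WithTop ℝ)

lemma coe_mul_le_coeff (hc0 : c 0 = 0)
    (hc : ∀ k, c (k + 1) =
      tTrace fun i j => (range (k + 1)).inf fun m => c m + tpow A (k + 1 - m) i j)
    {lam : ℝ} (hdiag : ∀ t : ℕ, 0 < t → ∀ i, ((t * lam : ℝ) : WithTop ℝ) ≤ tpow A t i i)
    (k : ℕ) :
    ((k * lam : ℝ) : WithTop ℝ) ≤ c k := by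
  induction k using Nat.strong_induction_on with
  | _ k ih =>
  rcases k with _ | k
  · simp [hc0]
  rw [hc k]
  refine Finset.le_inf fun i _ => Finset.le_inf fun m hm => ?_
  have hm : m < k + 1 := mem_range.1 hm
  calc ((↑(k + 1) * lam : ℝ) : WithTop ℝ)
      = ((m * lam : ℝ) : WithTop ℝ) + ((↑(k + 1 - m) * lam : ℝ) : WithTop ℝ) := by
        rw [← WithTop.coe_add, WithTop.coe_eq_coe, Nat.cast_sub hm.le]; ring
    _ ≤ c m + tpow A (k + 1 - m) i i := add_le_add (ih m hm) (hdiag _ (by omega) i)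

lemma coeff_le_tpow_self (hc0 : c 0 = 0)
    (hc : ∀ k, c (k + 1) =
      tTrace fun i j => (range (k + 1)).inf fun m => c m + tpow A (k + 1 - m) i j)
    {k : ℕ} (hk : 0 < k) (i : Fin n) : c k ≤ tpow A k i i := by
  obtain ⟨k, rfl⟩ : ∃ k', k = k' + 1 := ⟨k - 1, by omega⟩
  rw [hc k]
  calc tTrace (fun i j => (range (k + 1)).inf fun m => c m + tpow A (k + 1 - m) i j)
      ≤ (range (k + 1)).inf (fun m => c m + tpow A (k + 1 - m) i i) := inf_le (mem_univ i)
    _ ≤ c 0 + tpow A (k + 1 - 0) i i := inf_le (mem_range.2 (Nat.succ_pos k))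
    _ = tpow A (k + 1) i i := by rw [hc0, zero_add, Nat.sub_zero]

end Coefficients

section TropRoots

variable {n : ℕ} {c : ℕ → WithTop ℝ} {lam : ℝ}

lemma tTerm_zero (hc0 : c 0 = 0) (x : ℝ) : tTerm n c 0 x = ((n * x : ℝ) : WithTop ℝ) := by
  simp [tTerm, hc0]

lemma coe_le_tTerm (hge : ∀ k ≤ n, ((k * lam : ℝ) : WithTop ℝ) ≤ c k) {j : ℕ} (hj : j ≤ n)
    (x : ℝ) : ((j * lam + (n - j) * x : ℝ) : WithTop ℝ) ≤ tTerm n c j x := by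
  rw [tTerm, WithTop.coe_add, Nat.cast_sub hj]
  exact add_le_add_left (hge j hj) _

lemma isLeast_setOf_isTropRoot (hc0 : c 0 = 0)
    (hge : ∀ k ≤ n, ((k * lam : ℝ) : WithTop ℝ) ≤ c k) {s : ℕ} (hs : 0 < s) (hsn : s ≤ n)
    (hcs : c s = ((s * lam : ℝ) : WithTop ℝ)) :
    IsLeast {x | IsTropRoot n c x} lam := by
  have hmin : ∀ j ≤ n, ((n * lam : ℝ) : WithTop ℝ) ≤ tTerm n c j lam := fun j hj =>
    le_of_eq_of_le (by ring_nf) (coe_le_tTerm hge hj lam)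
  refine ⟨⟨0, s, n.zero_le, hsn, hs.ne, fun j hj => ?_, fun j hj => ?_⟩, ?_⟩
  · exact (tTerm_zero hc0 lam).trans_le (hmin j hj)
  · refine le_of_eq_of_le ?_ (hmin j hj)
    rw [tTerm, hcs, ← WithTop.coe_add, WithTop.coe_eq_coe, Nat.cast_sub hsn]
    ring
  · rintro x ⟨k, l, hk, hl, hkl, hxk, hxl⟩
    by_contra! hx
    obtain ⟨m, hm0, hmn, hxm⟩ : ∃ m, 0 < m ∧ m ≤ n ∧ tTerm n c m x ≤ tTerm n c 0 x := by
      rcases Nat.eq_zero_or_pos k with rfl | hk0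
      · exact ⟨l, by omega, hl, hxl 0 n.zero_le⟩
      · exact ⟨k, hk0, hk, hxk 0 n.zero_le⟩
    have hlt : n * x < m * lam + (n - m) * x := by
      have : (1 : ℝ) ≤ m := by exact_mod_cast hm0
      nlinarith
    have := (coe_le_tTerm hge hmn x).trans (hxm.trans_eq (tTerm_zero hc0 x))
    exact absurd (WithTop.coe_le_coe.1 this) (not_le.2 hlt)

end TropRoots

def kleenePlus {n : ℕ} (B : Matrix (Fin n) (Fin n) (WithTop ℝ)) :
    Matrix (Fin n) (Fin n) (WithTop ℝ) :=
  fun i j => (Icc 1 n).inf fun t => tpow B t i j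

section Eigenvector

variable {n : ℕ} (B : Matrix (Fin n) (Fin n) (WithTop ℝ))

lemma kleenePlus_le_tpow (hB : 0 ∈ lowerBounds {w | IsCircuitAvg B w}) {t : ℕ} (ht : 0 < t)
    (i j : Fin n) : kleenePlus B i j ≤ tpow B t i j := by
  induction t using Nat.strong_induction_on with
  | _ t ih =>
  by_cases htn : t ≤ n
  · exact inf_le (mem_Icc.2 ⟨ht, htn⟩)
  obtain ⟨f, rfl, rfl, hf⟩ := exists_walkWeight_le_tpow B ht i j
  have hrep : ¬ Set.InjOn f (Set.Iio (n + 1)) := fun h => by simpa using le_of_injOn_Iio h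
  obtain ⟨p, d, hd, hpd, hfpd⟩ := exists_eq_add_of_not_injOn_Iio hrep
  obtain ⟨r, rfl⟩ : ∃ r, t = p + d + r := ⟨t - (p + d), by omega⟩
  have hcycle : 0 ≤ walkWeight B d (fun k => f (p + k)) := by
    simpa using coe_mul_le_walkWeight_of_closed B hB hd (f := fun k => f (p + k)) (by simp [hfpd])
  calc kleenePlus B (f 0) (f (p + d + r)) ≤ tpow B (p + r) (f 0) (f (p + d + r)) :=
        ih (p + r) (by omega) (by omega)
    _ ≤ walkWeight B (p + r) (shortcut f p d) := by
        simpa [shortcut_add hfpd, shortcut_of_le (Nat.zero_le p)] using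
          tpow_le_walkWeight B (p + r) (shortcut f p d)
    _ ≤ walkWeight B (p + d + r) f := by
        rw [walkWeight_eq_shortcut_add_cycle B hfpd]
        exact le_add_of_nonneg_right hcycle
    _ ≤ tpow B (p + d + r) (f 0) (f (p + d + r)) := hf

lemma inf_add_kleenePlus (hB : 0 ∈ lowerBounds {w | IsCircuitAvg B w}) {j : Fin n}
    (hj : kleenePlus B j j ≤ 0) (i : Fin n) :
    univ.inf (fun l => B i l + kleenePlus B l j) = kleenePlus B i j := by
  apply le_antisymm
  · obtain ⟨t, ht, hK⟩ := exists_mem_eq_inf (Icc 1 n) ⟨1, mem_Icc.2 ⟨le_rfl, i.pos⟩⟩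
      fun t => tpow B t i j
    obtain ⟨⟨u, rfl⟩, hun⟩ : (∃ u, t = u + 1) ∧ t ≤ n :=
      ⟨⟨t - 1, by grind⟩, (mem_Icc.1 ht).2⟩
    change kleenePlus B i j = tpow B (u + 1) i j at hK
    rw [hK]
    rcases Nat.eq_zero_or_pos u with rfl | hu
    · calc univ.inf (fun l => B i l + kleenePlus B l j) ≤ B i j + kleenePlus B j j :=
            inf_le (mem_univ j)
        _ ≤ tpow B 1 i j := by rw [tpow_one]; exact add_le_of_nonpos_right hj
    · have hKu : ∀ l, kleenePlus B l j ≤ tpow B u l j := fun l =>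
        inf_le (mem_Icc.2 ⟨hu, by omega⟩)
      rw [tpow_succ']
      exact inf_mono_fun fun l _ => add_le_add_right (hKu l) _
  · refine Finset.le_inf fun l _ => ?_
    have hsplit : B i l + kleenePlus B l j = (Icc 1 n).inf fun t => B i l + tpow B t l j :=
      add_finset_inf _ _ _
    rw [hsplit]
    exact Finset.le_inf fun t ht => (kleenePlus_le_tpow B hB (by omega) i j).trans
      (tpow_succ_le' B t i l j)

end Eigenvector

lemma exists_eigenvector_of_isLeast {n : ℕ} (A : Matrix (Fin n) (Fin n) (WithTop ℝ)) {lam : ℝ}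
    (hlam : IsLeast {w | IsCircuitAvg A w} lam) :
    ∃ v : Fin n → WithTop ℝ, (∃ i, v i ≠ ⊤) ∧
      ∀ i, univ.inf (fun j => A i j + v j) = (lam : WithTop ℝ) + v i := by
  set B : Matrix (Fin n) (Fin n) (WithTop ℝ) := fun i j => A i j + ((-lam : ℝ) : WithTop ℝ)
  have hA : ∀ i j, A i j = B i j + (lam : WithTop ℝ) := fun i j => by
    simp [B, add_assoc]
  have hB : 0 ∈ lowerBounds {w | IsCircuitAvg B w} := fun w hw => by
    have hwA : IsCircuitAvg A (w + lam) := by simpa only [← hA] using hw.add_const B lam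
    simpa using hlam.2 hwA
  obtain ⟨s, f, hs, hf, -, hw⟩ := hlam.1
  have hK : kleenePlus B (f 0) (f 0) ≤ 0 := calc
    kleenePlus B (f 0) (f 0) ≤ tpow B s (f 0) (f s) := hf ▸ kleenePlus_le_tpow B hB hs _ _
    _ ≤ walkWeight B s f := tpow_le_walkWeight B s f
    _ = 0 := by
      rw [walkWeight_add_const, walkWeight, hw, ← WithTop.coe_add]
      simp
  refine ⟨fun i => kleenePlus B i (f 0), ⟨f 0, ne_top_of_le_ne_top WithTop.zero_ne_top hK⟩,
    fun i => ?_⟩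
  change univ.inf (fun j => A i j + kleenePlus B j (f 0)) = lam + kleenePlus B i (f 0)
  rw [← inf_add_kleenePlus B hB hK i, add_finset_inf]
  congr 1
  ext j
  rw [hA, add_assoc, add_left_comm]

/-- Let `ĝ_A(x) = xⁿ ⊕ c₁ ⊗ xⁿ⁻¹ ⊕ ⋯ ⊕ cₙ` be the Faddeev–LeVerrier-style
min-plus characteristic polynomial, with coefficients defined recursively by
`c_k = Tr(A^k ⊕ c₁ ⊗ A^{k-1} ⊕ ⋯ ⊕ c_{k-1} ⊗ A)` (`c₀ = 0`). If the network of
`A` contains a circuit, then the minimum root of `ĝ_A` equals the minimum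
circuit average weight, and it is a min-plus eigenvalue of `A`. -/
theorem flv_min_root_eq_min_circuit_avg_and_eigenvalue {n : ℕ}
    (A : Matrix (Fin n) (Fin n) (WithTop ℝ)) (c : ℕ → WithTop ℝ)
    (hc0 : c 0 = 0)
    (hc : ∀ k, c (k + 1) =
      tTrace fun i j => (range (k + 1)).inf fun m => c m + tpow A (k + 1 - m) i j)
    (hcirc : ∃ w, IsCircuitAvg A w) :
    ∃ lam : ℝ,
      IsLeast {w : ℝ | IsCircuitAvg A w} lam ∧
      IsLeast {x : ℝ | IsTropRoot n c x} lam ∧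
      ∃ v : Fin n → WithTop ℝ, (∃ i, v i ≠ ⊤) ∧
        ∀ i, Finset.univ.inf (fun j => A i j + v j) = (lam : WithTop ℝ) + v i := by
  obtain ⟨lam, hlam⟩ := exists_isLeast_setOf_isCircuitAvg A hcirc
  obtain ⟨s, f, hs, hf, hinj, hw⟩ := hlam.1
  have hge : ∀ k : ℕ, ((k * lam : ℝ) : WithTop ℝ) ≤ c k :=
    coe_mul_le_coeff A c hc0 hc fun t ht i => coe_mul_le_tpow_self A hlam.2 ht i
  have hle : c s ≤ ((s * lam : ℝ) : WithTop ℝ) := calc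
    c s ≤ tpow A s (f 0) (f s) := hf ▸ coeff_le_tpow_self A c hc0 hc hs (f 0)
    _ ≤ walkWeight A s f := tpow_le_walkWeight A s f
    _ = _ := hw
  exact ⟨lam, hlam, isLeast_setOf_isTropRoot hc0 (fun k _ => hge k) hs
    (le_of_injOn_Iio fun k hk l hl h => hinj k l hk hl h) (hle.antisymm (hge s)),
    exists_eigenvector_of_isLeast A hlam⟩
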